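/- arXiv:2012.13438 — 2 statements merged into one kernel-verified Lean document; each statement's English description precedes it below -/
import Mathlib

section
/- In ℓ₁, for distinct indices i ≠ j and any fixed finitely supported vectors t and g in ℓ₁, the elementary tensors x_i = e_i ⊗ t ⊗ g and x_j = e_j ⊗ t ⊗ g in the injective tensor product ℓ₁ ⊗ε ℓ₁ ⊗ε ℓ₁ satisfy ‖x_i − x_j‖ ≥ ‖t‖₁ · ‖g‖₁. -/
noncomputable abbrev ell1 : Type := lp (fun _ : ℕ => ℝ) 1

/-- The canonical image of the elementary tensor `x ⊗ y` in `B(X*, Y)`;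
the operator norm of sums of such operators is the injective tensor norm. -/
noncomputable def tensorElem {X Y : Type*} [NormedAddCommGroup X] [NormedSpace ℝ X]
    [NormedAddCommGroup Y] [NormedSpace ℝ Y] (x : X) (y : Y) :
    StrongDual ℝ X →L[ℝ] Y :=
  (NormedSpace.inclusionInDoubleDual ℝ X x).smulRight y

noncomputable instance : AddCommGroup (StrongDual ℝ ell1 →L[ℝ] ell1) :=
  ContinuousLinearMap.addCommGroup

instance : ContinuousAdd (StrongDual ℝ ell1 →L[ℝ] ell1) :=
  ContinuousLinearMap.topologicalAddGroup.toContinuousAdd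

/-- `ℓ₁ ⊗̂ε ℓ₁`, realized as the closed span of the elementary tensors in `B(ℓ₁*, ℓ₁)`. -/
noncomputable def epsTensor2 : Submodule ℝ (StrongDual ℝ ell1 →L[ℝ] ell1) :=
  (Submodule.span ℝ {T | ∃ x y : ell1, T = tensorElem x y}).topologicalClosure

instance : ContinuousAdd (StrongDual ℝ ell1 →L[ℝ] (StrongDual ℝ ell1 →L[ℝ] ell1)) :=
  ContinuousLinearMap.topologicalAddGroup.toContinuousAdd

/-- `ℓ₁ ⊗̂ε ℓ₁ ⊗̂ε ℓ₁`, realized as the closed span of elementary tensors in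
`B(ℓ₁*, B(ℓ₁*, ℓ₁))`. -/
noncomputable def epsTensor3 :
    Submodule ℝ (StrongDual ℝ ell1 →L[ℝ] (StrongDual ℝ ell1 →L[ℝ] ell1)) :=
  (Submodule.span ℝ {T | ∃ x y z : ell1, T = tensorElem x (tensorElem y z)}).topologicalClosure

noncomputable def e1 (i : ℕ) : ell1 := lp.single 1 i (1 : ℝ)

/-! The injective norm is a cross norm, so `‖(eᵢ - eⱼ) ⊗ t ⊗ g‖ = ‖eᵢ - eⱼ‖ ‖t‖ ‖g‖`,
and `‖eᵢ - eⱼ‖₁ ≥ |(eᵢ - eⱼ) i| = 1`. -/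

section CrossNorm

variable {X Y : Type*} [NormedAddCommGroup X] [NormedSpace ℝ X]
  [NormedAddCommGroup Y] [NormedSpace ℝ Y]

theorem norm_tensorElem (x : X) (y : Y) : ‖tensorElem x y‖ = ‖x‖ * ‖y‖ := by
  rw [tensorElem, ContinuousLinearMap.norm_smulRight_apply]
  exact congrArg (· * ‖y‖) ((NormedSpace.inclusionInDoubleDualLi ℝ).norm_map x)

theorem tensorElem_sub_left (x x' : X) (y : Y) :
    tensorElem x y - tensorElem x' y = tensorElem (x - x') y := by
  ext f
  simp [tensorElem, sub_smul]

end CrossNorm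

theorem one_le_norm_e1_sub {i j : ℕ} (hij : i ≠ j) : 1 ≤ ‖e1 i - e1 j‖ := by
  have hcoord : (e1 i - e1 j) i = 1 := by simp [e1, hij]
  simpa [hcoord] using lp.norm_apply_le_norm one_ne_zero (e1 i - e1 j) i

theorem stmt6_general (i j : ℕ) (hij : i ≠ j) (t g : ell1) :
    ‖t‖ * ‖g‖ ≤
      ‖tensorElem (e1 i) (tensorElem t g) - tensorElem (e1 j) (tensorElem t g)‖ := by
  rw [tensorElem_sub_left, norm_tensorElem, norm_tensorElem]
  exact le_mul_of_one_le_left (by positivity) (one_le_norm_e1_sub hij)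

theorem stmt6 (i j : ℕ) (hij : i ≠ j) (t g : ell1)
    (ht : (Function.support fun m => (t : ∀ _ : ℕ, ℝ) m).Finite)
    (hg : (Function.support fun m => (g : ∀ _ : ℕ, ℝ) m).Finite) :
    ‖t‖ * ‖g‖ ≤
      ‖tensorElem (e1 i) (tensorElem t g) - tensorElem (e1 j) (tensorElem t g)‖ :=
  stmt6_general i j hij t g
end

section
/- Suppose a Banach space X admits a sequence of finite-dimensional subspaces (F_k)_{k≥1} whose union spans a dense subspace and a constant a > 0 such that for any 0 = q_0 < q_1 < … < q_n and any vectors y_i ∈ span{F_j : q_{i−1} < j ≤ q_i} (1 ≤ i ≤ n), one has a²‖Σ_{i=1}^n y_i‖² ≥ Σ_{i=1}^n ‖y_i‖². Then sup_n δ_n(X) ≤ a. -/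
open scoped BigOperators
open Filter

/-- Interleaved indices `i₁ < j₁ < i₂ < j₂ < …`. -/
def Interleaved {n : ℕ} (i j : Fin n → ℕ) : Prop :=
  (∀ k, i k < j k) ∧ ∀ (k : Fin n) (h : k.1 + 1 < n), j k < i ⟨k.1 + 1, h⟩

def IsBoundedArray {X : Type*} [NormedAddCommGroup X] {n : ℕ} (x : Fin n → ℕ → X) : Prop :=
  ∃ M : ℝ, ∀ k i, ‖x k i‖ ≤ M

def IsSeparatedArray {X : Type*} [NormedAddCommGroup X] {n : ℕ} (C : ℝ)
    (x : Fin n → ℕ → X) : Prop :=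
  ∀ k i j, i ≠ j → C ≤ ‖x k i - x k j‖

/-- `δ_n(X)`. -/
noncomputable def deltaN (X : Type*) [NormedAddCommGroup X] (n : ℕ) : ℝ :=
  sInf {d : ℝ | 0 < d ∧ ∀ C > (0:ℝ), ∀ x : Fin n → ℕ → X, IsBoundedArray x →
    IsSeparatedArray C x → ∃ i j : Fin n → ℕ, Interleaved i j ∧
      C * Real.sqrt n ≤ d * ‖∑ k, (x k (i k) - x k (j k))‖}

/-!
Let `Z_q` be the closed span of the `F_l` with `l > q`. Since `⋃ F_j` spans a dense subspace,
`X ⧸ Z_q` is finite-dimensional, so any bounded sequence has two far-out terms whose difference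
is `η`-close to `Z_q`, hence `η`-close to a vector of a finite block `span {F_l : q < l ≤ q'}`.
Doing this row after row, with each new block and pair of indices beyond the previous ones,
makes the differences `x^k_{i_k} - x^k_{j_k}` `η`-perturbations of a block sequence whose terms
have norm at least `C - η`. The lower `ℓ₂` estimate then gives
`√n (C - η) ≤ a (‖∑_k (x^k_{i_k} - x^k_{j_k})‖ + n η)`, and letting `η → 0` shows that every
`d > a` is admissible in the definition of `δ_n(X)`.
-/

open Metric Set

theorem exists_lt_dist_lt_of_isBounded_range {α : Type*} [PseudoMetricSpace α] [ProperSpace α]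
    {u : ℕ → α} (hu : Bornology.IsBounded (range u)) (t : ℕ) {η : ℝ} (hη : 0 < η) :
    ∃ i j, t ≤ i ∧ i < j ∧ dist (u i) (u j) < η := by
  obtain ⟨R, hR⟩ := hu.subset_closedBall (u 0)
  obtain ⟨L, -, φ, hφ, hconv⟩ := tendsto_subseq_of_bounded isBounded_closedBall
    (fun i => hR (mem_range_self i))
  obtain ⟨N, hN⟩ := Metric.cauchySeq_iff.1 hconv.cauchySeq η hη
  exact ⟨φ (max N t), φ (max N t + 1), (le_max_right N t).trans (hφ.id_le _),
    hφ (Nat.lt_succ_self _), hN _ (le_max_left N t) _ (by omega)⟩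

theorem Submodule.exists_norm_sub_lt_of_norm_mk_lt {X : Type*} [NormedAddCommGroup X]
    [NormedSpace ℝ X] (S : Submodule ℝ X) {x : X} {η : ℝ}
    (hx : ‖(Submodule.Quotient.mk x : X ⧸ S.topologicalClosure)‖ < η) :
    ∃ s ∈ S, ‖x - s‖ < η := by
  have hdist : infDist x (S.topologicalClosure : Set X) < η :=
    QuotientAddGroup.norm_mk (S := S.topologicalClosure.toAddSubgroup) x ▸ hx
  rw [Submodule.topologicalClosure_coe, infDist_closure,
    infDist_lt_iff ⟨0, S.zero_mem⟩] at hdist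
  simpa only [dist_eq_norm, SetLike.mem_coe] using hdist

theorem finiteDimensional_quotient_of_dense_sup {X : Type*} [NormedAddCommGroup X]
    [NormedSpace ℝ X] {G Z : Submodule ℝ X} [FiniteDimensional ℝ G] [IsClosed (Z : Set X)]
    (hdense : Dense ((G ⊔ Z : Submodule ℝ X) : Set X)) : FiniteDimensional ℝ (X ⧸ Z) := by
  have himage : Submodule.map Z.mkQ (G ⊔ Z) = Submodule.map Z.mkQ G := by
    rw [Submodule.map_sup, Submodule.mkQ_map_self, sup_bot_eq]
  have hclosed : IsClosed ((Submodule.map Z.mkQ G : Submodule ℝ (X ⧸ Z)) : Set (X ⧸ Z)) :=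
    Submodule.closed_of_finiteDimensional _
  have hd : Dense ((Submodule.map Z.mkQ G : Submodule ℝ (X ⧸ Z)) : Set (X ⧸ Z)) := by
    rw [← himage, Submodule.map_coe]
    exact (Submodule.Quotient.mk_surjective Z).denseRange.dense_image continuous_quot_mk hdense
  have htop : Submodule.map Z.mkQ G = ⊤ :=
    SetLike.coe_injective (by rw [Submodule.top_coe, ← hclosed.closure_eq, hd.closure_eq])
  exact Module.Finite.of_surjective (Z.mkQ.domRestrict G) (by
    rw [← LinearMap.range_eq_top, LinearMap.range_domRestrict, htop])

theorem sqrt_card_mul_le_of_sum_sq_le {ι : Type*} [Fintype ι] {r : ι → ℝ} {c A : ℝ}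
    (hA : 0 ≤ A) (hc : ∀ k, c ≤ r k) (h : ∑ k, r k ^ 2 ≤ A ^ 2) :
    √(Fintype.card ι) * c ≤ A := by
  rcases le_or_gt c 0 with hc0 | hc0
  · exact (mul_nonpos_of_nonneg_of_nonpos (Real.sqrt_nonneg _) hc0).trans hA
  refine le_of_pow_le_pow_left₀ two_ne_zero hA ?_
  calc (√(Fintype.card ι) * c) ^ 2 = ∑ _k : ι, c ^ 2 := by
        rw [mul_pow, Real.sq_sqrt (Nat.cast_nonneg _), Finset.sum_const, nsmul_eq_mul,
          Finset.card_univ]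
    _ ≤ ∑ k, r k ^ 2 := Finset.sum_le_sum fun k _ => pow_le_pow_left₀ hc0.le (hc k) 2
    _ ≤ A ^ 2 := h

theorem exists_interleaved_of_forall_exists {P : ℕ → ℕ → ℕ → ℕ → ℕ → Prop}
    (step : ∀ k t q, ∃ i j q', t ≤ i ∧ i < j ∧ q < q' ∧ P k i j q q') :
    ∃ i j q : ℕ → ℕ, q 0 = 0 ∧ StrictMono q ∧ (∀ k, i k < j k) ∧ (∀ k, j k < i (k + 1)) ∧
      ∀ k, P k (i k) (j k) (q k) (q (k + 1)) := by
  choose I J Q hI hIJ hQ hP using step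
  -- `s k = (t, q)`: the next `i` must be `≥ t`, and the next block starts after `q`.
  let s : ℕ → ℕ × ℕ := fun k =>
    Nat.rec (0, 0) (fun k p => (J k p.1 p.2 + 1, Q k p.1 p.2)) k
  refine ⟨fun k => I k (s k).1 (s k).2, fun k => J k (s k).1 (s k).2, fun k => (s k).2, rfl,
    strictMono_nat_of_lt_succ fun k => hQ _ _ _, fun k => hIJ _ _ _,
    fun k => Nat.lt_of_succ_le (hI (k + 1) _ _), fun k => hP _ _ _⟩

theorem Submodule.exists_mem_biSup_Ioc_of_mem_biSup_Ioi {R M : Type*} [Semiring R]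
    [AddCommMonoid M] [Module R M] (F : ℕ → Submodule R M) {q : ℕ} {z : M}
    (hz : z ∈ ⨆ l ∈ Ioi q, F l) : ∃ q', q < q' ∧ z ∈ ⨆ l ∈ Ioc q q', F l := by
  have hmono : Monotone fun b => ⨆ l ∈ Ioc q b, F l := fun b b' h =>
    biSup_mono fun l hl => Ioc_subset_Ioc_right h hl
  rw [← iUnion_Ioc_right, iSup_iUnion, Submodule.mem_iSup_of_directed _ hmono.directed_le] at hz
  obtain ⟨b, hb⟩ := hz
  exact ⟨max b (q + 1), by omega, hmono (le_max_left _ _) hb⟩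

section Blocks

variable {X : Type*} [NormedAddCommGroup X] [NormedSpace ℝ X] (F : ℕ → Submodule ℝ X)

theorem finiteDimensional_quotient_closure_biSup_Ioi (hfd : ∀ j, FiniteDimensional ℝ (F j))
    (hdense : Dense ((⨆ j, F j : Submodule ℝ X) : Set X)) (q : ℕ) :
    FiniteDimensional ℝ (X ⧸ (⨆ l ∈ Ioi q, F l).topologicalClosure) := by
  have := Submodule.isClosed_topologicalClosure (⨆ l ∈ Ioi q, F l)
  have : FiniteDimensional ℝ (⨆ l : Fin (q + 1), F l : Submodule ℝ X) := by
    have := fun l : Fin (q + 1) => hfd l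
    infer_instance
  refine finiteDimensional_quotient_of_dense_sup (G := ⨆ l : Fin (q + 1), F l)
    (hdense.mono (SetLike.coe_mono (iSup_le fun l => ?_)))
  rcases le_or_gt l q with hl | hl
  · exact le_sup_of_le_left (le_iSup (fun l : Fin (q + 1) => F l) ⟨l, by omega⟩)
  · exact le_sup_of_le_right ((le_biSup F hl).trans (Submodule.le_topologicalClosure _))

variable {F}

theorem exists_sub_sub_mem_biSup_Ioc_norm_lt (hfd : ∀ j, FiniteDimensional ℝ (F j))
    (hdense : Dense ((⨆ j, F j : Submodule ℝ X) : Set X)) {u : ℕ → X}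
    (hu : Bornology.IsBounded (range u)) (t q : ℕ) {η : ℝ} (hη : 0 < η) :
    ∃ i j q', t ≤ i ∧ i < j ∧ q < q' ∧
      ∃ z ∈ ⨆ l ∈ Ioc q q', F l, ‖u i - u j - z‖ < η := by
  set Z := (⨆ l ∈ Ioi q, F l).topologicalClosure
  have := Submodule.isClosed_topologicalClosure (⨆ l ∈ Ioi q, F l)
  have := finiteDimensional_quotient_closure_biSup_Ioi F hfd hdense q
  obtain ⟨M, hM⟩ := hu.exists_norm_le
  have hv : Bornology.IsBounded (range fun i => (Submodule.Quotient.mk (u i) : X ⧸ Z)) :=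
    isBounded_iff_forall_norm_le.2 ⟨M, forall_mem_range.2 fun i =>
      (Submodule.Quotient.norm_mk_le _ _).trans (hM _ (mem_range_self i))⟩
  obtain ⟨i, j, hti, hij, hdist⟩ := exists_lt_dist_lt_of_isBounded_range hv t hη
  rw [dist_eq_norm, ← Submodule.Quotient.mk_sub] at hdist
  obtain ⟨s, hs, hlt⟩ := Submodule.exists_norm_sub_lt_of_norm_mk_lt _ hdist
  obtain ⟨q', hq', hs'⟩ := Submodule.exists_mem_biSup_Ioc_of_mem_biSup_Ioi F hs
  exact ⟨i, j, q', hti, hij, hq', s, hs', hlt⟩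

theorem exists_interleaved_block_approx (hfd : ∀ j, FiniteDimensional ℝ (F j))
    (hdense : Dense ((⨆ j, F j : Submodule ℝ X) : Set X)) {n : ℕ} {x : Fin n → ℕ → X}
    (hx : IsBoundedArray x) {η : ℝ} (hη : 0 < η) :
    ∃ i j : Fin n → ℕ, Interleaved i j ∧ ∃ q : ℕ → ℕ, q 0 = 0 ∧ StrictMono q ∧
      ∃ z : Fin n → X, (∀ k : Fin n, z k ∈ ⨆ l ∈ Ioc (q k.1) (q (k.1 + 1)), F l) ∧
        ∀ k, ‖x k (i k) - x k (j k) - z k‖ < η := by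
  obtain ⟨M, hM⟩ := hx
  have step : ∀ k t q, ∃ i j q', t ≤ i ∧ i < j ∧ q < q' ∧ ∀ hk : k < n,
      ∃ z ∈ ⨆ l ∈ Ioc q q', F l, ‖x ⟨k, hk⟩ i - x ⟨k, hk⟩ j - z‖ < η := by
    intro k t q
    by_cases hk : k < n
    · obtain ⟨i, j, q', hti, hij, hq, hz⟩ := exists_sub_sub_mem_biSup_Ioc_norm_lt hfd hdense
        (isBounded_iff_forall_norm_le.2 ⟨M, forall_mem_range.2 (hM ⟨k, hk⟩)⟩) t q hη
      exact ⟨i, j, q', hti, hij, hq, fun _ => hz⟩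
    · exact ⟨t, t + 1, q + 1, le_rfl, t.lt_succ_self, q.lt_succ_self, fun h => absurd h hk⟩
  obtain ⟨i, j, q, hq0, hq, hij, hji, hP⟩ := exists_interleaved_of_forall_exists step
  choose z hz hzx using fun k : Fin n => hP k k.2
  exact ⟨fun k => i k, fun k => j k, ⟨fun k => hij k, fun k _ => hji k⟩, q, hq0, hq, z, hz, hzx⟩

theorem exists_interleaved_sqrt_mul_sub_le (hfd : ∀ j, FiniteDimensional ℝ (F j))
    (hdense : Dense ((⨆ j, F j : Submodule ℝ X) : Set X)) {a : ℝ} (ha : 0 ≤ a)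
    (hest : ∀ (n : ℕ) (q : ℕ → ℕ), q 0 = 0 → StrictMono q →
      ∀ y : Fin n → X,
        (∀ i : Fin n, y i ∈ ⨆ j ∈ Set.Ioc (q i.1) (q (i.1 + 1)), F j) →
        ∑ i, ‖y i‖ ^ 2 ≤ a ^ 2 * ‖∑ i, y i‖ ^ 2)
    {n : ℕ} {C : ℝ} {x : Fin n → ℕ → X} (hx : IsBoundedArray x) (hsep : IsSeparatedArray C x)
    {η : ℝ} (hη : 0 < η) :
    ∃ i j, Interleaved i j ∧
      √n * (C - η) ≤ a * (‖∑ k, (x k (i k) - x k (j k))‖ + n * η) := by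
  obtain ⟨i, j, hij, q, hq0, hq, z, hz, hzx⟩ := exists_interleaved_block_approx hfd hdense hx hη
  refine ⟨i, j, hij, ?_⟩
  have hzC : ∀ k, C - η ≤ ‖z k‖ := fun k => by
    linarith [hsep k _ _ (hij.1 k).ne, hzx k, norm_sub_norm_le (x k (i k) - x k (j k)) (z k)]
  have hperturb : ‖∑ k, (x k (i k) - x k (j k) - z k)‖ ≤ n * η := by
    simpa using norm_sum_le_of_le Finset.univ fun k _ => (hzx k).le
  have hsum : ‖∑ k, z k‖ ≤ ‖∑ k, (x k (i k) - x k (j k))‖ + n * η := by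
    rw [Finset.sum_sub_distrib] at hperturb
    exact (norm_le_norm_add_norm_sub _ _).trans (add_le_add_right hperturb _)
  calc √n * (C - η) ≤ a * ‖∑ k, z k‖ := by
        simpa using sqrt_card_mul_le_of_sum_sq_le (by positivity) hzC
          ((hest n q hq0 hq z hz).trans_eq (mul_pow a _ 2).symm)
    _ ≤ _ := mul_le_mul_of_nonneg_left hsum ha

end Blocks

theorem stmt7_general (X : Type*) [NormedAddCommGroup X] [NormedSpace ℝ X]
    (F : ℕ → Subspace ℝ X) (hfd : ∀ j, FiniteDimensional ℝ (F j))
    (hdense : Dense ((⨆ j, F j : Subspace ℝ X) : Set X)) (a : ℝ) (ha : 0 < a)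
    (hest : ∀ (n : ℕ) (q : ℕ → ℕ), q 0 = 0 → StrictMono q →
      ∀ y : Fin n → X,
        (∀ i : Fin n, y i ∈ ⨆ j ∈ Set.Ioc (q i.1) (q (i.1 + 1)), F j) →
        ∑ i, ‖y i‖ ^ 2 ≤ a ^ 2 * ‖∑ i, y i‖ ^ 2) :
    ∀ n : ℕ, deltaN X n ≤ a := by
  intro n
  refine le_of_forall_pos_le_add fun ε hε => csInf_le ⟨0, fun d hd => hd.1.le⟩
    ⟨by positivity, fun C hC x hx hsep => ?_⟩
  -- chosen so that the loss `η (√n + a n)` in the perturbed estimate equals `ε C √n / (a + ε)`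
  set η := ε * C / ((a + ε) * (1 + a * √n))
  obtain ⟨i, j, hij, hle⟩ :=
    exists_interleaved_sqrt_mul_sub_le hfd hdense ha.le hest hx hsep (η := η) (by positivity)
  refine ⟨i, j, hij, ?_⟩
  have hη : η * ((a + ε) * (1 + a * √n)) = ε * C := div_mul_cancel₀ _ (by positivity)
  rw [show (n : ℝ) * η = √n * √n * η by rw [Real.mul_self_sqrt n.cast_nonneg]] at hle
  have hscaled : a * (C * √n) ≤ a * ((a + ε) * ‖∑ k, (x k (i k) - x k (j k))‖) := by
    nlinarith [mul_le_mul_of_nonneg_left hle (by positivity : (0 : ℝ) ≤ a + ε),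
      congrArg (· * √n) hη]
  exact le_of_mul_le_mul_left hscaled ha

theorem stmt7 (X : Type*) [NormedAddCommGroup X] [NormedSpace ℝ X] [CompleteSpace X]
    (F : ℕ → Subspace ℝ X) (hfd : ∀ j, FiniteDimensional ℝ (F j))
    (hdense : Dense ((⨆ j, F j : Subspace ℝ X) : Set X)) (a : ℝ) (ha : 0 < a)
    (hest : ∀ (n : ℕ) (q : ℕ → ℕ), q 0 = 0 → StrictMono q →
      ∀ y : Fin n → X,
        (∀ i : Fin n, y i ∈ ⨆ j ∈ Set.Ioc (q i.1) (q (i.1 + 1)), F j) →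
        ∑ i, ‖y i‖ ^ 2 ≤ a ^ 2 * ‖∑ i, y i‖ ^ 2) :
    ∀ n : ℕ, deltaN X n ≤ a :=
  stmt7_general X F hfd hdense a ha hest
end
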